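/- arXiv:alg-geom/9602008 — 3 statements merged into one kernel-verified Lean document; each statement's English description precedes it below -/
import Mathlib

section
/- For every integer n ≥ 1, setting k = 2n+1, the product over r = 1, …, 2n of (4·sin²(rπ/(2n+1)))^{⌊r/2⌋} equals (2n+1)^n. -/
/-!
`f k r` is `‖1 - ζ ^ r‖ ^ 2` for `ζ = exp (2πi / k)`, so `∏_{0<r<k} f k r = ‖∏ (1 - ζ ^ r)‖ ^ 2 = k ^ 2`.
Since `f k (k - r) = f k r` and, for `k = 2n + 1`, `⌊r/2⌋ + ⌊(k - r)/2⌋ = n`, the square of the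
product in question is `(k ^ 2) ^ n`; being nonnegative, the product is `k ^ n`.
-/

open Finset Complex

/-- The function `f_k(r) = 4 sin²(rπ/k)`. -/
noncomputable def f (k : ℕ) (r : ℝ) : ℝ := 4 * Real.sin (r * Real.pi / k) ^ 2

lemma f_nonneg (k : ℕ) (r : ℝ) : 0 ≤ f k r := by
  unfold f; positivity

lemma f_sub_left (k : ℕ) (r : ℝ) : f k (k - r) = f k r := by
  rcases eq_or_ne k 0 with rfl | hk
  · simp [f]
  · have hk : (k : ℝ) ≠ 0 := Nat.cast_ne_zero.mpr hk
    rw [f, f, sub_mul, sub_div, mul_div_cancel_left₀ _ hk, Real.sin_pi_sub]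

lemma f_eq_norm_one_sub_pow_sq (k j : ℕ) :
    f k j = ‖1 - exp (2 * Real.pi * I / k) ^ j‖ ^ 2 := by
  have hexp : exp (2 * Real.pi * I / k) ^ j = exp (I * ((2 * Real.pi * j / k : ℝ) : ℂ)) := by
    rw [← exp_nat_mul]
    push_cast
    ring_nf
  rw [hexp, norm_sub_rev, norm_exp_I_mul_ofReal_sub_one, Real.norm_eq_abs, sq_abs, f]
  ring_nf

lemma prod_Ico_f (k : ℕ) (hk : 0 < k) : ∏ r ∈ Ico 1 k, f k r = (k : ℝ) ^ 2 := by
  obtain ⟨m, rfl⟩ := Nat.exists_eq_add_one.mpr hk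
  have hroot := (isPrimitiveRoot_exp (m + 1) m.succ_ne_zero).prod_one_sub_pow_eq_order
  rw [← Nat.cast_add_one] at hroot
  have hnorm := congrArg (‖·‖ ^ 2) hroot
  simp only [norm_prod, ← prod_pow, norm_natCast] at hnorm
  rw [prod_Ico_eq_prod_range, Nat.add_sub_cancel, ← hnorm]
  refine prod_congr rfl fun j _ ↦ ?_
  rw [Nat.add_comm 1 j, f_eq_norm_one_sub_pow_sq]

lemma prod_Ico_f_pow_reflect (k : ℕ) (e : ℕ → ℕ) :
    ∏ r ∈ Ico 1 k, f k r ^ e r = ∏ r ∈ Ico 1 k, f k r ^ e (k - r) := by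
  have hreflect := prod_Ico_reflect (fun r ↦ f k r ^ e (k - r)) 1 k.le_succ
  rw [Nat.add_sub_cancel, Nat.add_sub_cancel_left] at hreflect
  rw [← hreflect]
  refine prod_congr rfl fun r hr ↦ ?_
  have hrk : r ≤ k := (mem_Ico.mp hr).2.le
  rw [Nat.sub_sub_self hrk, Nat.cast_sub hrk, f_sub_left]

theorem prod_f_pow_odd_general (n : ℕ) :
    ∏ r ∈ Finset.Icc 1 (2 * n), f (2 * n + 1) (r : ℝ) ^ (r / 2) = (2 * n + 1 : ℝ) ^ n := by
  rw [← Ico_add_one_right_eq_Icc]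
  set k := 2 * n + 1
  set P := ∏ r ∈ Ico 1 k, f k r ^ (r / 2)
  have hreflect : P = ∏ r ∈ Ico 1 k, f k r ^ ((k - r) / 2) :=
    prod_Ico_f_pow_reflect k (· / 2)
  have hsq : P ^ 2 = ((2 * n + 1 : ℝ) ^ n) ^ 2 := by
    calc P ^ 2 = P * ∏ r ∈ Ico 1 k, f k r ^ ((k - r) / 2) := by rw [sq, ← hreflect]
      _ = ∏ r ∈ Ico 1 k, f k r ^ n := by
          rw [← prod_mul_distrib]
          refine prod_congr rfl fun r hr ↦ ?_
          rw [← pow_add]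
          congr 1
          have := mem_Ico.mp hr
          omega
      _ = ((2 * n + 1 : ℝ) ^ n) ^ 2 := by
          rw [prod_pow, prod_Ico_f k (by omega), ← pow_mul, ← pow_mul, mul_comm]
          push_cast [k]
          rfl
  have hP : 0 ≤ P := prod_nonneg fun r _ ↦ pow_nonneg (f_nonneg k r) _
  exact (pow_left_inj₀ hP (by positivity) two_ne_zero).mp hsq

/-- For every `n ≥ 1`, with `k = 2n+1`:
`∏_{r=1}^{2n} (4 sin²(rπ/(2n+1)))^⌊r/2⌋ = (2n+1)^n`. -/
theorem prod_f_pow_odd (n : ℕ) (hn : 1 ≤ n) :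
    ∏ r ∈ Finset.Icc 1 (2 * n), f (2 * n + 1) (r : ℝ) ^ (r / 2) = (2 * n + 1 : ℝ) ^ n :=
  prod_f_pow_odd_general n
end

section
/- For all integers n ≥ 2 and 1 ≤ l ≤ n−1, one has (∏_{j=l+1}^{n} f_{2n}(j−l)·f_{2n}(j+l)) · (∏_{i=0}^{l−1} f_{2n}(l−i)·f_{2n}(l+i)) = 4n², where f_k(r) = 4·sin²(rπ/k). -/
/-!
Put `ζ = exp(πi/n)` and `a = ζ^l`. Then `f_{2n}(j - l) = |a - ζ^j|²` and
`f_{2n}(j + l) = |a - ζ^{-j}|²`, so the product is `|Q(a)|²` with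
`Q = ∏_{j ∈ [0, n], j ≠ l} (X - ζ^j)(X - ζ^{-j})`. As `j` runs over `[0, n]`, the `ζ^{±j}`
run over all `2n`-th roots of unity, with `±1` counted twice, so
`(X - a)(X - a⁻¹) Q = (X² - 1)(X^{2n} - 1)`. Differentiating at `a` gives
`(a - a⁻¹) Q(a) = (a² - 1) · 2n a^{2n-1}`, and as `|a| = 1` and `a² ≠ 1`, this forces
`|Q(a)| = 2n`.
-/

open Finset Polynomial Complex
open scoped Real

theorem Finset.prod_range_succ_mul_reflect {M : Type*} [CommMonoid M] (h : ℕ → M) (n : ℕ) :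
    ∏ j ∈ range (n + 1), h j * h (2 * n - j)
      = h n * h (2 * n) * ∏ k ∈ range (2 * n), h k := by
  rw [prod_mul_distrib, ← Nat.Ico_zero_eq_range, prod_Ico_reflect h 0 (by omega),
    show 2 * n + 1 - (n + 1) = n by omega, Nat.sub_zero, Nat.Ico_zero_eq_range, prod_range_succ,
    mul_assoc, mul_left_comm, prod_range_mul_prod_Ico h (by omega : n ≤ 2 * n + 1),
    prod_range_succ]
  ac_rfl

theorem IsPrimitiveRoot.pow_eq_neg_one_of_two_mul {R : Type*} [CommRing R] [NoZeroDivisors R]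
    {ζ : R} {n : ℕ} (hζ : IsPrimitiveRoot ζ (2 * n)) (hn : n ≠ 0) : ζ ^ n = -1 := by
  have := hζ.pow_of_dvd hn (dvd_mul_left n 2)
  rw [Nat.mul_div_cancel _ (Nat.pos_of_ne_zero hn)] at this
  exact this.eq_neg_one_of_two_right

theorem IsPrimitiveRoot.prod_range_succ_X_sub_C_mul_reflect {R : Type*} [CommRing R] [IsDomain R]
    {ζ : R} {n : ℕ} (hζ : IsPrimitiveRoot ζ (2 * n)) (hn : n ≠ 0) :
    ∏ j ∈ range (n + 1), (X - C (ζ ^ j)) * (X - C (ζ ^ (2 * n - j)))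
      = (X ^ 2 - 1) * (X ^ (2 * n) - 1) := by
  rw [prod_range_succ_mul_reflect (fun k ↦ X - C (ζ ^ k)), hζ.pow_eq_neg_one_of_two_mul hn,
    hζ.pow_eq_one, ← C_1, X_pow_sub_C_eq_prod hζ (by omega) (one_pow _)]
  simp only [mul_one, map_neg, C_1]
  ring

theorem Polynomial.eval_derivative_X_sub_C_mul {R : Type*} [CommRing R] (a : R) (p : R[X]) :
    (derivative ((X - C a) * p)).eval a = p.eval a := by
  simp

theorem IsPrimitiveRoot.mul_prod_erase_sub_pow_mul_sub_pow_reflect {R : Type*} [CommRing R]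
    [IsDomain R] {ζ : R} {n l : ℕ} (hζ : IsPrimitiveRoot ζ (2 * n)) (hn : n ≠ 0)
    (hln : l ≤ n) :
    (ζ ^ l - ζ ^ (2 * n - l)) *
        ∏ j ∈ (range (n + 1)).erase l, (ζ ^ l - ζ ^ j) * (ζ ^ l - ζ ^ (2 * n - j))
      = ((ζ ^ l) ^ 2 - 1) * (2 * n * (ζ ^ l) ^ (2 * n - 1)) := by
  have ha : (ζ ^ l) ^ (2 * n) = 1 := by
    rw [← pow_mul, mul_comm, pow_mul, hζ.pow_eq_one, one_pow]
  have hpoly := hζ.prod_range_succ_X_sub_C_mul_reflect hn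
  rw [← mul_prod_erase _ _ (mem_range.2 (Nat.lt_succ_of_le hln)), mul_assoc] at hpoly
  have hderiv := congrArg (fun p ↦ (derivative p).eval (ζ ^ l)) hpoly
  simp only [eval_derivative_X_sub_C_mul, eval_mul, eval_sub, eval_X, eval_C, eval_prod] at hderiv
  rw [hderiv, derivative_mul]
  simp [derivative_X_pow, ha]

theorem IsPrimitiveRoot.prod_erase_norm_sub_pow_mul_norm_sub_pow_reflect {ζ : ℂ} {n l : ℕ}
    (hζ : IsPrimitiveRoot ζ (2 * n)) (hl : 0 < l) (hln : l < n) :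
    ∏ j ∈ (range (n + 1)).erase l, ‖ζ ^ l - ζ ^ j‖ * ‖ζ ^ l - ζ ^ (2 * n - j)‖
      = 2 * n := by
  have hζ1 : ‖ζ‖ = 1 := hζ.norm'_eq_one (by omega)
  have hsub : ζ ^ l * (ζ ^ l - ζ ^ (2 * n - l)) = (ζ ^ l) ^ 2 - 1 := by
    rw [mul_sub, ← pow_add ζ l (2 * n - l), Nat.add_sub_cancel' (by omega), hζ.pow_eq_one, sq]
  have hne : (ζ ^ l) ^ 2 - 1 ≠ 0 := by
    rw [sub_ne_zero, ← pow_mul]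
    exact hζ.pow_ne_one_of_pos_of_lt (by omega) (by omega)
  have key := congrArg norm (hζ.mul_prod_erase_sub_pow_mul_sub_pow_reflect (by omega) hln.le)
  have hsubn := congrArg norm hsub
  simp only [norm_mul, norm_prod, norm_pow, hζ1, one_pow, one_mul, mul_one] at key hsubn
  rw [hsubn] at key
  exact_mod_cast mul_left_cancel₀ (norm_ne_zero_iff.2 hne) (key.trans (by simp))

theorem f_natCast_sub_natCast (k p q : ℕ) :
    f k (p - q) = ‖cexp (2 * π * I / k) ^ p - cexp (2 * π * I / k) ^ q‖ ^ 2 := by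
  have hsplit : cexp (2 * π * I / k) ^ p - cexp (2 * π * I / k) ^ q
      = cexp (2 * π * I / k) ^ q * (cexp (I * ((2 * ((p - q) * π / k) : ℝ))) - 1) := by
    rw [mul_sub, mul_one, ← exp_nat_mul, ← exp_nat_mul, ← exp_add]
    congr 2
    push_cast
    ring
  have hnorm : ‖cexp (2 * π * I / k)‖ = 1 := by
    rw [show 2 * π * I / k = ((2 * π / k : ℝ) : ℂ) * I by push_cast; ring,
      norm_exp_ofReal_mul_I]
  rw [hsplit, norm_mul, norm_pow, hnorm, one_pow, one_mul, norm_exp_I_mul_ofReal_sub_one,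
    mul_div_cancel_left₀ _ two_ne_zero, norm_mul, Real.norm_eq_abs, Real.norm_eq_abs, mul_pow,
    sq_abs, sq_abs, f]
  norm_num

theorem f_neg (k : ℕ) (r : ℝ) : f k (-r) = f k r := by
  rw [f, f, neg_mul, neg_div, Real.sin_neg, neg_sq]

theorem f_add_self (k : ℕ) (r : ℝ) : f k (r + k) = f k r := by
  rcases eq_or_ne k 0 with rfl | hk
  · simp [f]
  · rw [f, f, add_mul, add_div, mul_div_cancel_left₀ _ (Nat.cast_ne_zero.2 hk), Real.sin_add_pi,
      neg_sq]

theorem prod_denominator_general (n l : ℕ) (hl1 : 1 ≤ l) (hl2 : l ≤ n - 1) :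
    (∏ j ∈ Finset.Icc (l + 1) n,
        f (2 * n) ((j : ℝ) - (l : ℝ)) * f (2 * n) ((j : ℝ) + (l : ℝ))) *
      (∏ i ∈ Finset.range l,
        f (2 * n) ((l : ℝ) - (i : ℝ)) * f (2 * n) ((l : ℝ) + (i : ℝ)))
      = 4 * (n : ℝ) ^ 2 := by
  set ζ := cexp (2 * π * I / (2 * n : ℕ))
  have hζ : IsPrimitiveRoot ζ (2 * n) := isPrimitiveRoot_exp _ (by omega)
  have hfactor : ∀ j ≤ n, f (2 * n) (j - l) * f (2 * n) (j + l)
      = (‖ζ ^ l - ζ ^ j‖ * ‖ζ ^ l - ζ ^ (2 * n - j)‖) ^ 2 := by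
    intro j hj
    have hreflect : (j + l : ℝ) = (l - (2 * n - j : ℕ)) + (2 * n : ℕ) := by
      push_cast [Nat.cast_sub (by omega : j ≤ 2 * n)]
      ring
    rw [hreflect, f_add_self, ← f_neg _ (j - l), neg_sub, f_natCast_sub_natCast,
      f_natCast_sub_natCast, mul_pow]
  have hsplit : Icc (l + 1) n ∪ range l = (range (n + 1)).erase l := by
    ext j
    simp only [mem_union, mem_Icc, mem_range, mem_erase]
    omega
  have hdisj : Disjoint (Icc (l + 1) n) (range l) :=
    disjoint_left.2 fun j hj hj' ↦ by simp only [mem_Icc, mem_range] at hj hj'; omega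
  calc _ = ∏ j ∈ Icc (l + 1) n ∪ range l,
          (‖ζ ^ l - ζ ^ j‖ * ‖ζ ^ l - ζ ^ (2 * n - j)‖) ^ 2 := by
        rw [prod_union hdisj]
        congr 1 <;> refine prod_congr rfl fun j hj ↦ ?_
        · exact hfactor j (mem_Icc.1 hj).2
        · rw [← f_neg _ (l - j), neg_sub, add_comm, hfactor j (by rw [mem_range] at hj; omega)]
    _ = (2 * n) ^ 2 := by
        rw [hsplit, prod_pow,
          hζ.prod_erase_norm_sub_pow_mul_norm_sub_pow_reflect (by omega) (by omega)]
    _ = 4 * n ^ 2 := by ring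

/-- For `n ≥ 2` and `1 ≤ l ≤ n-1`:
`(∏_{j=l+1}^{n} f_{2n}(j-l) f_{2n}(j+l)) · (∏_{i=0}^{l-1} f_{2n}(l-i) f_{2n}(l+i)) = 4n²`. -/
theorem prod_denominator (n l : ℕ) (hn : 2 ≤ n) (hl1 : 1 ≤ l) (hl2 : l ≤ n - 1) :
    (∏ j ∈ Finset.Icc (l + 1) n,
        f (2 * n) ((j : ℝ) - (l : ℝ)) * f (2 * n) ((j : ℝ) + (l : ℝ))) *
      (∏ i ∈ Finset.range l,
        f (2 * n) ((l : ℝ) - (i : ℝ)) * f (2 * n) ((l : ℝ) + (i : ℝ)))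
      = 4 * (n : ℝ) ^ 2 :=
  prod_denominator_general n l hl1 hl2
end

section
/- For all integers n ≥ 4 and g ≥ 2, the following identity holds: (2n)^{g−1}·(n−1) + 2^{3g−1}·n^{g−1} + 2^{3g−1} = ((2n)^g + 2^g)/2 + (2^{2g} − 1)·((2n)^{g−1} + 2^{g−1}). -/
/-!
With `g = k + 1` the even-theta count `((2n)^g + 2^g)/2` halves to `(2n)^k n + 2^k`, after which
the identity is a polynomial identity in `n` and `2^k`: the Prym terms
`(4^g - 1)((2n)^k + 2^k)` give `2^{3g-1} n^k + 2^{3g-1} - (2n)^k - 2^k`.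
-/

theorem two_mul_pow_succ_add_two_pow_succ_div_two {K : Type*} [Field K] (x : K) (k : ℕ)
    (h2 : (2 : K) ≠ 0) :
    ((2 * x) ^ (k + 1) + 2 ^ (k + 1)) / 2 = (2 * x) ^ k * x + 2 ^ k := by
  rw [div_eq_iff h2]
  ring

theorem numerology_even_plus_succ {K : Type*} [Field K] (x : K) (k : ℕ) (h2 : (2 : K) ≠ 0) :
    (2 * x) ^ k * (x - 1) + 2 ^ (3 * k + 2) * x ^ k + 2 ^ (3 * k + 2)
      = ((2 * x) ^ (k + 1) + 2 ^ (k + 1)) / 2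
        + (2 ^ (2 * k + 2) - 1) * ((2 * x) ^ k + 2 ^ k) := by
  rw [two_mul_pow_succ_add_two_pow_succ_div_two x k h2]
  ring

theorem numerology_even_plus_general (n g : ℕ) (hg : 2 ≤ g) :
    (2 * n : ℝ) ^ (g - 1) * (n - 1) + 2 ^ (3 * g - 1) * (n : ℝ) ^ (g - 1) + 2 ^ (3 * g - 1)
      = ((2 * n : ℝ) ^ g + 2 ^ g) / 2
        + (2 ^ (2 * g) - 1) * ((2 * n : ℝ) ^ (g - 1) + 2 ^ (g - 1)) := by
  obtain ⟨k, rfl⟩ : ∃ k, g = k + 1 := ⟨g - 1, by omega⟩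
  have h3 : 3 * (k + 1) - 1 = 3 * k + 2 := by omega
  rw [Nat.add_sub_cancel, h3, mul_add_one]
  exact numerology_even_plus_succ (n : ℝ) k two_ne_zero

/-- For `n ≥ 4` and `g ≥ 2`:
`(2n)^{g-1}(n-1) + 2^{3g-1} n^{g-1} + 2^{3g-1}
  = ((2n)^g + 2^g)/2 + (2^{2g} - 1)((2n)^{g-1} + 2^{g-1})`.
This is the numerology identity underlying Theorem 6.1(1), '+' case, for `m = 2n`. -/
theorem numerology_even_plus (n g : ℕ) (hn : 4 ≤ n) (hg : 2 ≤ g) :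
    (2 * n : ℝ) ^ (g - 1) * (n - 1) + 2 ^ (3 * g - 1) * (n : ℝ) ^ (g - 1) + 2 ^ (3 * g - 1)
      = ((2 * n : ℝ) ^ g + 2 ^ g) / 2
        + (2 ^ (2 * g) - 1) * ((2 * n : ℝ) ^ (g - 1) + 2 ^ (g - 1)) :=
  numerology_even_plus_general n g hg
end
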